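/- arXiv:1607.01548 — 2 statements merged into one kernel-verified Lean document; each statement's English description precedes it below -/
import Mathlib

section
/- Let □mod6 := {n ∈ ℕ, n ≥ 1 | ∃ x ≥ 1 with x² ≡ n (mod 6)} be the set of positive integers that are congruent to a square modulo 6. Then M(□mod6) = {1, 3, 4, 6, 7, 9, 22, 25, 28, 52, 55, 58, 82, 85, 88}. -/
/-- `Subseq x y` means the decimal digit string of `x` is a subsequence of that of `y`. -/
def Subseq (x y : ℕ) : Prop := (Nat.digits 10 x).Sublist (Nat.digits 10 y)

/-- The minimal set of `S`: elements of `S` containing no smaller element of `S`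
as a subsequence of their decimal digits. -/
def minimalSet (S : Set ℕ) : Set ℕ := {s ∈ S | ¬ ∃ n ∈ S, n < s ∧ Subseq n s}

/-! The squares modulo 6 are the idempotents `0, 1, 3, 4`, i.e. the residues that are not `2`
modulo 3. A minimal element either is a single digit of this kind, or all its nonzero digits
are `2, 5, 8`; then the digit sum forces at least two nonzero digits, and the first two of them
already form an element of the set. -/

instance : DecidableRel Subseq := fun x y =>
  inferInstanceAs (Decidable ((Nat.digits 10 x).Sublist (Nat.digits 10 y)))

theorem exists_sq_modEq_six_iff {n : ℕ} : (∃ x, 1 ≤ x ∧ x ^ 2 ≡ n [MOD 6]) ↔ n % 3 ≠ 2 := by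
  constructor
  · rintro ⟨x, -, hx⟩
    have hx : x ^ 2 % 6 = n % 6 := hx
    rw [Nat.pow_mod] at hx
    have := Nat.mod_lt x (by norm_num : 6 > 0)
    interval_cases x % 6 <;> omega
  · intro hn
    refine ⟨n + 6, by omega, ?_⟩
    show (n + 6) ^ 2 % 6 = n % 6
    rw [Nat.pow_mod, Nat.add_mod_right]
    have := Nat.mod_lt n (by norm_num : 6 > 0)
    interval_cases h : n % 6 <;> omega

theorem Nat.le_of_digits_sublist {b m n : ℕ} (hb : 1 < b)
    (h : (b.digits m).Sublist (b.digits n)) : m ≤ n := by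
  rcases h.length_le.lt_or_eq with hlt | heq
  · have hn : n ≠ 0 := by rintro rfl; simp at hlt
    rw [Nat.length_digits b n hb hn] at hlt
    apply le_of_lt
    calc m < b ^ (b.digits m).length := Nat.lt_base_pow_length_digits hb
      _ ≤ b ^ Nat.log b n := Nat.pow_le_pow_right (by omega) (by omega)
      _ ≤ n := Nat.pow_log_le_self b hn
  · exact (Nat.digits_inj_iff.1 (h.eq_of_length heq)).le

theorem Subseq.le {m n : ℕ} (h : Subseq m n) : m ≤ n :=
  Nat.le_of_digits_sublist (by norm_num) h

theorem subseq_ofDigits {l : List ℕ} {n : ℕ} (hl : l.Sublist (Nat.digits 10 n))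
    (hlast : ∀ h : l ≠ [], l.getLast h ≠ 0) : Subseq (Nat.ofDigits 10 l) n := by
  have hlt : ∀ d ∈ l, d < 10 := fun d hd => Nat.digits_lt_base (by norm_num) (hl.subset hd)
  rw [Subseq, Nat.digits_ofDigits 10 (by norm_num) l hlt hlast]
  exact hl

theorem mem_minimalSet_iff {S : Set ℕ} {s : ℕ} :
    s ∈ minimalSet S ↔ s ∈ S ∧ ∀ m < s, m ∈ S → ¬ Subseq m s := by
  simp only [minimalSet, Set.mem_ofPred_eq, not_exists, not_and]
  exact and_congr_right fun _ => forall_congr' fun _ => forall_comm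

theorem eq_of_mem_minimalSet {S : Set ℕ} {s m : ℕ} (hs : s ∈ minimalSet S) (hm : m ∈ S)
    (h : Subseq m s) : m = s :=
  h.le.eq_of_not_lt fun hlt => hs.2 ⟨m, hm, hlt, h⟩

theorem List.exists_pair_sublist_of_sum_mod_ne {k r : ℕ} {l : List ℕ}
    (hl : ∀ d ∈ l, d ≠ 0 → d % k = r) (hsum : l.sum % k ≠ r) (hne : ∃ d ∈ l, d ≠ 0) :
    ∃ a b, [a, b].Sublist l ∧ a ≠ 0 ∧ b ≠ 0 := by
  induction l with
  | nil => simp at hne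
  | cons x t ih =>
    by_cases hx : x = 0
    · subst hx
      obtain ⟨a, b, hab, ha, hb⟩ := ih (fun d hd => hl d (mem_cons_of_mem 0 hd))
        (by simpa using hsum) (by simpa using hne)
      exact ⟨a, b, hab.cons 0, ha, hb⟩
    · obtain ⟨d, hd, hd0⟩ : ∃ d ∈ t, d ≠ 0 := by
        by_contra! ht
        rw [sum_cons, List.sum_eq_zero_iff.2 ht, add_zero] at hsum
        exact hsum (hl x mem_cons_self hx)
      exact ⟨x, d, (singleton_sublist.2 hd).cons_cons x, hx, hd0⟩

theorem minimalSet_mod_three_ne_two_subset :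
    minimalSet {n : ℕ | 0 < n ∧ n % 3 ≠ 2} ⊆
      {1, 3, 4, 6, 7, 9, 22, 25, 28, 52, 55, 58, 82, 85, 88} := by
  intro s hs
  simp only [Set.mem_insert_iff, Set.mem_singleton_iff]
  by_cases hd : ∃ d ∈ Nat.digits 10 s, d ≠ 0 ∧ d % 3 ≠ 2
  · obtain ⟨d, hd, hd0, hd3⟩ := hd
    have hds : d = s := eq_of_mem_minimalSet hs ⟨Nat.pos_of_ne_zero hd0, hd3⟩
      (by simpa using subseq_ofDigits (List.singleton_sublist.2 hd) (by simpa using hd0))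
    have := Nat.digits_lt_base (by norm_num) hd
    omega
  · push Not at hd
    have hsum : (Nat.digits 10 s).sum % 3 ≠ 2 := by
      rw [← Nat.modEq_digits_sum 3 10 (by norm_num) s]
      exact hs.1.2
    obtain ⟨a, b, hab, ha, hb⟩ := List.exists_pair_sublist_of_sum_mod_ne hd hsum
      ⟨_, List.getLast_mem _, Nat.getLast_digit_ne_zero 10 hs.1.1.ne'⟩
    have ha3 := hd a (hab.subset (by simp)) ha
    have hb3 := hd b (hab.subset (by simp)) hb
    have hab10 : ∀ d ∈ [a, b], d < 10 := fun d hd =>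
      Nat.digits_lt_base (by norm_num) (hab.subset hd)
    have hm : Nat.ofDigits 10 [a, b] = a + 10 * b := by simp [Nat.ofDigits]
    have habs : Nat.ofDigits 10 [a, b] = s :=
      eq_of_mem_minimalSet hs ⟨by omega, by omega⟩ (subseq_ofDigits hab (by simpa using hb))
    have ha10 := hab10 a (by simp)
    have hb10 := hab10 b (by simp)
    omega

theorem minimalSet_squares_mod_six :
    minimalSet {n : ℕ | 1 ≤ n ∧ ∃ x : ℕ, 1 ≤ x ∧ x ^ 2 ≡ n [MOD 6]} =
      {1, 3, 4, 6, 7, 9, 22, 25, 28, 52, 55, 58, 82, 85, 88} := by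
  have hS : {n : ℕ | 1 ≤ n ∧ ∃ x : ℕ, 1 ≤ x ∧ x ^ 2 ≡ n [MOD 6]} = {n | 0 < n ∧ n % 3 ≠ 2} := by
    ext n
    exact and_congr_right fun _ => exists_sq_modEq_six_iff
  rw [hS]
  refine minimalSet_mod_three_ne_two_subset.antisymm ?_
  rintro s (rfl | rfl | rfl | rfl | rfl | rfl | rfl | rfl | rfl | rfl | rfl | rfl | rfl | rfl |
    rfl) <;> exact mem_minimalSet_iff.2 (by decide)
end

section
/- Let S := {2} ∪ {p ∈ ℕ | p prime, p ≡ 1 (mod 4)} and T := {p ∈ ℕ | p prime, p ≡ 3 (mod 4)}. Then M(S ∪ T) is a proper subset of M(S) ∪ M(T); that is, M(S ∪ T) ⊆ M(S) ∪ M(T) holds but M(S ∪ T) ≠ M(S) ∪ M(T). -/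
/-!
The inclusion holds for any two sets: a witness against minimality in `A` or in `B` is one in
`A ∪ B`. It is strict here because of `13`: its only smaller digit subsequences are `0`, `1`
and `3`, so it is minimal in the first set, but `3 ≡ 3 (mod 4)` is a prime that kills it
in the union.
-/

lemma minimalSet_union_subset (A B : Set ℕ) :
    minimalSet (A ∪ B) ⊆ minimalSet A ∪ minimalSet B := by
  rintro s ⟨hs | hs, hmin⟩
  · exact Or.inl ⟨hs, fun ⟨n, hn, hlt, hsub⟩ => hmin ⟨n, Or.inl hn, hlt, hsub⟩⟩
  · exact Or.inr ⟨hs, fun ⟨n, hn, hlt, hsub⟩ => hmin ⟨n, Or.inr hn, hlt, hsub⟩⟩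

lemma eq_of_subseq_thirteen {n : ℕ} (h : Subseq n 13) : n = 0 ∨ n = 1 ∨ n = 3 ∨ n = 13 := by
  have hmem : Nat.digits 10 n ∈ [3, 1].sublists := List.mem_sublists.2 (by simpa [Subseq] using h)
  rw [← Nat.ofDigits_digits 10 n]
  have hsublists : [3, 1].sublists = [[], [3], [1], [3, 1]] := rfl
  simp only [hsublists, List.mem_cons, List.not_mem_nil, or_false] at hmem
  rcases hmem with hd | hd | hd | hd <;> simp [hd, Nat.ofDigits]

theorem minimalSet_union_ssubset_example :
    minimalSet (({2} ∪ {p : ℕ | p.Prime ∧ p % 4 = 1}) ∪ {p : ℕ | p.Prime ∧ p % 4 = 3}) ⊂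
      minimalSet ({2} ∪ {p : ℕ | p.Prime ∧ p % 4 = 1}) ∪
        minimalSet {p : ℕ | p.Prime ∧ p % 4 = 3} := by
  refine (Set.ssubset_iff_of_subset (minimalSet_union_subset _ _)).2 ⟨13, Or.inl ?_, ?_⟩
  · refine ⟨Or.inr ⟨by norm_num, rfl⟩, ?_⟩
    rintro ⟨n, hn, hlt, hsub⟩
    rcases eq_of_subseq_thirteen hsub with rfl | rfl | rfl | rfl <;> simp_all [Nat.not_prime_one]
  · exact fun ⟨_, hmin⟩ => hmin ⟨3, Or.inr ⟨Nat.prime_three, rfl⟩, by norm_num, by simp [Subseq]⟩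
end
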